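/- The Graver basis $Gr_A$ of the toric ideal $I_A$ contains the universal Gröbner basis $\mathcal{U}_A$, i.e. every binomial appearing in some reduced Gröbner basis of $I_A$ lies in $Gr_A$. -/

import Mathlib

open MvPolynomial

noncomputable section

universe u

variable {α β : Type*} [Fintype α] [Fintype β]

/-- The Laurent monomial `t^a` in the group algebra `ℂ[ℤ^α]` (the Laurent polynomial ring). -/
def laurentMonomial (a : α → ℤ) : AddMonoidAlgebra ℂ (α →₀ ℤ) :=
  AddMonoidAlgebra.single (Finsupp.equivFunOnFinite.symm a) 1

/-- The monomial map `φ_A : x_j ↦ t^{a_j}` where `a_j` is the `j`-th column of `A`. -/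
def phiMap (A : Matrix α β ℤ) : MvPolynomial β ℂ →ₐ[ℂ] AddMonoidAlgebra ℂ (α →₀ ℤ) :=
  MvPolynomial.aeval fun j => laurentMonomial fun i => A i j

/-- The toric ideal `I_A`, the kernel of `φ_A`. -/
def toricIdeal (A : Matrix α β ℤ) : Ideal (MvPolynomial β ℂ) :=
  RingHom.ker (phiMap A).toRingHom

/-- The leading monomial (exponent vector) of `f` with respect to a monomial order. -/
def leadMon (m : MonomialOrder β) (f : MvPolynomial β ℂ) : β →₀ ℕ :=
  m.toSyn.symm (f.support.sup m.toSyn)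

/-- The leading coefficient of `f` with respect to a monomial order. -/
def leadCoeff (m : MonomialOrder β) (f : MvPolynomial β ℂ) : ℂ := f.coeff (leadMon m f)

/-- `G` is a Gröbner basis of `I`: a finite set of nonzero elements of `I` whose leading
monomials generate the initial ideal of `I` (i.e. the leading monomial of every nonzero
element of `I` is divisible by the leading monomial of some element of `G`). -/
def IsGroebnerBasis (m : MonomialOrder β) (I : Ideal (MvPolynomial β ℂ))
    (G : Set (MvPolynomial β ℂ)) : Prop :=
  G.Finite ∧ (∀ g ∈ G, g ∈ I ∧ g ≠ 0) ∧
    ∀ f ∈ I, f ≠ 0 → ∃ g ∈ G, leadMon m g ≤ leadMon m f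

/-- `G` is the reduced Gröbner basis of `I`: a Gröbner basis, all of whose elements are monic,
such that no monomial occurring in an element of `G` is divisible by the leading monomial of
another element of `G`. -/
def IsReducedGroebnerBasis (m : MonomialOrder β) (I : Ideal (MvPolynomial β ℂ))
    (G : Set (MvPolynomial β ℂ)) : Prop :=
  IsGroebnerBasis m I G ∧ (∀ g ∈ G, leadCoeff m g = 1) ∧
    ∀ g ∈ G, ∀ g' ∈ G, g' ≠ g → ∀ c ∈ g.support, ¬ leadMon m g' ≤ c

/-- The positive part `w⁺` of an integer vector, as an exponent vector. -/
def posPart (w : β → ℤ) : β →₀ ℕ := Finsupp.equivFunOnFinite.symm fun i => (w i).toNat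

/-- The negative part `w⁻` of an integer vector, as an exponent vector. -/
def negPart (w : β → ℤ) : β →₀ ℕ := Finsupp.equivFunOnFinite.symm fun i => (-(w i)).toNat

/-- The binomial `x^{w⁺} - x^{w⁻}` associated to an integer vector `w`. -/
def binom (w : β → ℤ) : MvPolynomial β ℂ := monomial (posPart w) 1 - monomial (negPart w) 1

/-- A circuit of `A`: a nonzero integer vector in `ker A` with coprime entries whose support
is minimal with respect to inclusion among supports of nonzero elements of `ker A`. -/
def IsCircuit (A : Matrix α β ℤ) (u : β → ℤ) : Prop :=
  u ≠ 0 ∧ A.mulVec u = 0 ∧ Finset.gcd Finset.univ u = 1 ∧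
    ∀ v : β → ℤ, v ≠ 0 → A.mulVec v = 0 →
      {i | v i ≠ 0} ⊆ {i | u i ≠ 0} → {i | v i ≠ 0} = {i | u i ≠ 0}

/-- A sign pattern `ρ ∈ {+1,-1}^n`. -/
def IsSignPattern (ρ : β → ℤ) : Prop := ∀ i, ρ i = 1 ∨ ρ i = -1

/-- Membership in `H_ρ = ℝ^n_ρ ∩ ker_ℤ(A)`: integer kernel elements conforming to the sign
pattern `ρ`. -/
def MemH (A : Matrix α β ℤ) (ρ : β → ℤ) (w : β → ℤ) : Prop :=
  A.mulVec w = 0 ∧ ∀ i, 0 ≤ ρ i * w i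

/-- `w` belongs to the Hilbert basis of the pointed cone `H_ρ`: it is a nonzero element of
`H_ρ` which cannot be written as the sum of two nonzero elements of `H_ρ` (equivalently, it
belongs to the unique minimal generating set of the monoid `H_ρ`). -/
def IsHilbertBasisElem (A : Matrix α β ℤ) (ρ : β → ℤ) (w : β → ℤ) : Prop :=
  MemH A ρ w ∧ w ≠ 0 ∧
    ¬ ∃ a b : β → ℤ, MemH A ρ a ∧ MemH A ρ b ∧ a ≠ 0 ∧ b ≠ 0 ∧ w = a + b

/-- `w` is a Graver basis vector of `A`: a member of the Hilbert basis of `H_ρ` for some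
sign pattern `ρ`. -/
def IsGraverVector (A : Matrix α β ℤ) (w : β → ℤ) : Prop :=
  ∃ ρ : β → ℤ, IsSignPattern ρ ∧ IsHilbertBasisElem A ρ w

/-- The Graver basis `Gr_A` of the toric ideal `I_A`, as a set of binomials. -/
def graverBasis (A : Matrix α β ℤ) : Set (MvPolynomial β ℂ) :=
  { p | ∃ w : β → ℤ, IsGraverVector A w ∧ p = binom w }

/-- The degree of the binomial `x^{w⁺} - x^{w⁻}`, namely `max(Σ w⁺, Σ w⁻)`. -/
def degZ (w : β → ℤ) : ℕ := max (∑ i, (w i).toNat) (∑ i, (-(w i)).toNat)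

/-- The columns of `A` generate a pointed cone. -/
def PointedCone' (A : Matrix α β ℤ) : Prop :=
  ∀ c : β → ℚ, (∀ i, 0 ≤ c i) → (A.map (Int.cast : ℤ → ℚ)).mulVec c = 0 → c = 0

/-- The row span of `A` contains the all-ones vector. -/
def RowSpanOne (A : Matrix α β ℤ) : Prop :=
  ∃ w : α → ℚ, (A.map (Int.cast : ℤ → ℚ)).vecMul w = fun _ => 1

/-- The universal Gröbner basis of an ideal: the union of its reduced Gröbner bases over
all term orders. -/
def universalGroebnerBasis {γ : Type u} [Fintype γ] (I : Ideal (MvPolynomial γ ℂ)) :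
    Set (MvPolynomial γ ℂ) :=
  { p | ∃ (m : MonomialOrder.{u, u} γ) (G : Set (MvPolynomial γ ℂ)),
      IsReducedGroebnerBasis m I G ∧ p ∈ G }

/-- The initial ideal of `I` with respect to a monomial order: the monomial ideal generated by
the leading monomials of the nonzero elements of `I`. -/
def initialIdeal (m : MonomialOrder β) (I : Ideal (MvPolynomial β ℂ)) :
    Ideal (MvPolynomial β ℂ) :=
  Ideal.span { p | ∃ f ∈ I, f ≠ 0 ∧ p = monomial (leadMon m f) (1 : ℂ) }

/-!
Every element of a reduced Gröbner basis `G` of `I_A` is a binomial `x^u - x^v` with leading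
monomial `x^u`: its terms must cancel in `φ_A`, and reducedness forbids any other term. Reducedness
also says that `x^u` is the only monomial of `x^u - x^v` in the initial ideal, and that only its
own leading term divides it. So if `x^s - x^t ∈ I_A` with `s ≤ u`, `t ≤ v`, `s ≠ t`, its leading
term must be `x^s` and `s = u`. This excludes a common variable of `x^u` and `x^v` (cancel it), so
`u - v` has positive part `u` and negative part `v`; and it excludes a conformal splitting of
`u - v` into two nonzero kernel vectors, each of which would have positive part `u`.
-/

set_option linter.unusedSectionVars false

section ToricIdeal

variable (A : Matrix α β ℤ)

/-- The exponent in `φ_A(x^u) = t^{A u}`. -/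
def aDegree (u : β →₀ ℕ) : α → ℤ := A.mulVec fun j => (u j : ℤ)

lemma aDegree_add (u v : β →₀ ℕ) : aDegree A (u + v) = aDegree A u + aDegree A v := by
  simp only [aDegree, Finsupp.coe_add, Pi.add_apply, Nat.cast_add]
  exact Matrix.mulVec_add A _ _

lemma aDegree_posPart_eq_negPart {w : β → ℤ} (hw : A.mulVec w = 0) :
    aDegree A (_root_.posPart w) = aDegree A (_root_.negPart w) := by
  rw [← sub_eq_zero, aDegree, aDegree, ← Matrix.mulVec_sub, ← hw]
  congr 1
  ext j
  simp only [_root_.posPart, _root_.negPart, Finsupp.coe_equivFunOnFinite_symm, Pi.sub_apply]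
  omega

lemma mulVec_natCast_sub_eq_zero {u v : β →₀ ℕ} (h : aDegree A u = aDegree A v) :
    A.mulVec (fun i => (u i : ℤ) - v i) = 0 :=
  (Matrix.mulVec_sub A _ _).trans (sub_eq_zero.mpr h)

lemma phiMap_monomial (u : β →₀ ℕ) (c : ℂ) :
    phiMap A (monomial u c) =
      AddMonoidAlgebra.single (Finsupp.equivFunOnFinite.symm (aDegree A u)) c := by
  rw [phiMap, aeval_monomial, Finsupp.prod_fintype _ _ (fun _ => pow_zero _)]
  simp only [laurentMonomial, AddMonoidAlgebra.single_pow, one_pow, AddMonoidAlgebra.prod_single,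
    Finset.prod_const_one, Algebra.algebraMap_eq_smul_one]
  rw [smul_mul_assoc, one_mul, AddMonoidAlgebra.smul_single, smul_eq_mul, mul_one]
  refine congrArg (AddMonoidAlgebra.single · c) ?_
  ext i
  simp [aDegree, Matrix.mulVec, dotProduct, Finsupp.finsetSum_apply, mul_comm]

lemma phiMap_eq_sum (p : MvPolynomial β ℂ) :
    phiMap A p = ∑ c ∈ p.support,
      AddMonoidAlgebra.single (Finsupp.equivFunOnFinite.symm (aDegree A c)) (p.coeff c) := by
  conv_lhs => rw [← p.support_sum_monomial_coeff]
  simp only [map_sum, phiMap_monomial]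

lemma monomial_sub_monomial_mem_toricIdeal {u v : β →₀ ℕ} (h : aDegree A u = aDegree A v) :
    monomial u (1 : ℂ) - monomial v 1 ∈ toricIdeal A := by
  rw [toricIdeal, RingHom.mem_ker, AlgHom.toRingHom_eq_coe, AlgHom.coe_toRingHom, map_sub,
    phiMap_monomial, phiMap_monomial, h, sub_self]

lemma binom_mem_toricIdeal {w : β → ℤ} (hw : A.mulVec w = 0) : binom w ∈ toricIdeal A :=
  monomial_sub_monomial_mem_toricIdeal A (aDegree_posPart_eq_negPart A hw)

lemma exists_ne_aDegree_eq_of_mem_toricIdeal {p : MvPolynomial β ℂ} (hp : p ∈ toricIdeal A)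
    {u : β →₀ ℕ} (hu : u ∈ p.support) : ∃ v ∈ p.support, v ≠ u ∧ aDegree A v = aDegree A u := by
  classical
  by_contra! hne
  have hcoeff := congrArg (fun q => AddMonoidAlgebra.coeff q
    (Finsupp.equivFunOnFinite.symm (aDegree A u))) ((phiMap_eq_sum A p).symm.trans hp)
  simp only [AddMonoidAlgebra.coeff_sum, AddMonoidAlgebra.coeff_single, AddMonoidAlgebra.coeff_zero,
    Finsupp.finsetSum_apply, Finsupp.single_apply, Finsupp.coe_zero, Pi.zero_apply] at hcoeff
  rw [Finset.sum_eq_single u (fun v hv hvu => if_neg fun h => hne v hv hvu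
    (Finsupp.equivFunOnFinite.symm.injective h)) (fun h => absurd hu h), if_pos rfl] at hcoeff
  exact mem_support_iff.mp hu hcoeff

end ToricIdeal

section MonomialOrder

variable {R : Type*} [CommRing R] (m : MonomialOrder β)

lemma monomial_sub_monomial_ne_zero [Nontrivial R] {s t : β →₀ ℕ} (h : s ≠ t) :
    monomial s (1 : R) - monomial t 1 ≠ 0 :=
  sub_ne_zero.mpr fun h' => h (monomial_left_injective one_ne_zero h')

lemma eq_or_eq_of_mem_support_monomial_sub_monomial {s t c : β →₀ ℕ}
    (hc : c ∈ (monomial s (1 : R) - monomial t 1).support) : c = s ∨ c = t := by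
  classical
  rcases Finset.mem_union.mp (support_sub β _ _ hc) with hs | ht
  · exact .inl (Finset.mem_singleton.mp (support_monomial_subset hs))
  · exact .inr (Finset.mem_singleton.mp (support_monomial_subset ht))

lemma degree_monomial_sub_monomial [Nontrivial R] {s t : β →₀ ℕ} (h : s ≠ t) :
    m.degree (monomial s (1 : R) - monomial t 1) = s ∨
      m.degree (monomial s (1 : R) - monomial t 1) = t :=
  eq_or_eq_of_mem_support_monomial_sub_monomial
    (m.degree_mem_support (monomial_sub_monomial_ne_zero h))

lemma degree_ne_zero_of_mem_support {f : MvPolynomial β R} {c : β →₀ ℕ} (hc : c ∈ f.support)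
    (hne : c ≠ m.degree f) : m.degree f ≠ 0 := by
  intro h0
  have hc0 := m.le_degree hc
  rw [h0, map_zero, ← m.eq_zero_iff, m.toSyn_eq_zero_iff] at hc0
  exact hne (hc0.trans h0.symm)

end MonomialOrder

-- `leadMon m f` and `leadCoeff m f` unfold to `m.degree f` and `m.leadingCoeff f`.
namespace IsReducedGroebnerBasis

variable {m : MonomialOrder β} {I : Ideal (MvPolynomial β ℂ)} {G : Set (MvPolynomial β ℂ)}
  {p : MvPolynomial β ℂ}

theorem eq_degree_of_degree_le (hG : IsReducedGroebnerBasis m I G) (hp : p ∈ G)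
    {f : MvPolynomial β ℂ} (hf : f ∈ I) (hf0 : f ≠ 0) {c : β →₀ ℕ} (hc : c ∈ p.support)
    (hle : m.degree f ≤ c) : c = m.degree p ∧ m.degree p ≤ m.degree f := by
  obtain ⟨g, hg, hgf⟩ := hG.1.2.2 f hf hf0
  by_cases hgp : g = p
  · subst hgp
    have hgc : m.degree g ≤ c := hgf.trans hle
    exact ⟨m.toSyn.injective (le_antisymm (m.le_degree hc) (m.toSyn_monotone hgc)), hgf⟩
  · exact absurd (hgf.trans hle) (hG.2.2 p hp g hg hgp c hc)

theorem eq_monomial_sub_monomial (hG : IsReducedGroebnerBasis m I G) (hp : p ∈ G)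
    {v : β →₀ ℕ} (hv : v ∈ p.support) (hvp : v ≠ m.degree p)
    (hI : monomial (m.degree p) 1 - monomial v 1 ∈ I) :
    p = monomial (m.degree p) 1 - monomial v 1 := by
  classical
  by_contra hne
  set q := p - (monomial (m.degree p) 1 - monomial v 1)
  have hq0 : q ≠ 0 := sub_ne_zero.mpr hne
  have hqp : m.degree q ∈ p.support := by
    rcases Finset.mem_union.mp (support_sub β _ _ (m.degree_mem_support hq0)) with h | h
    · exact h
    · rcases eq_or_eq_of_mem_support_monomial_sub_monomial h with h | h <;> rw [h]
      exacts [m.degree_mem_support (hG.1.2.1 p hp).2, hv]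
  have hqu : q.coeff (m.degree p) = 0 := by
    have h1 : p.coeff (m.degree p) = 1 := hG.2.1 p hp
    simp only [q, coeff_sub, coeff_monomial, if_pos, if_neg hvp, h1, sub_zero, sub_self]
  have := (hG.eq_degree_of_degree_le hp (sub_mem (hG.1.2.1 p hp).1 hI) hq0 hqp le_rfl).1
  exact m.coeff_degree_ne_zero_iff.mpr hq0 (this ▸ hqu)

theorem eq_degree_of_monomial_sub_monomial_mem (hG : IsReducedGroebnerBasis m I G) (hp : p ∈ G)
    {v s t : β →₀ ℕ} (hv : v ∈ p.support) (hvp : v ≠ m.degree p) (hs : s ≤ m.degree p)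
    (ht : t ≤ v) (hst : s ≠ t) (hI : monomial s 1 - monomial t 1 ∈ I) : s = m.degree p := by
  have hf0 := monomial_sub_monomial_ne_zero (R := ℂ) hst
  rcases degree_monomial_sub_monomial (R := ℂ) m hst with h | h
  · have hp0 := m.degree_mem_support (hG.1.2.1 p hp).2
    have hle := (hG.eq_degree_of_degree_le hp hI hf0 hp0 (by rwa [h])).2
    rw [h] at hle
    exact le_antisymm hs hle
  · exact absurd (hG.eq_degree_of_degree_le hp hI hf0 hv (by rwa [h])).1 hvp

theorem degree_apply_eq_zero_or_eq_zero {A : Matrix α β ℤ}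
    (hG : IsReducedGroebnerBasis m (toricIdeal A) G) (hp : p ∈ G) {v : β →₀ ℕ}
    (hv : v ∈ p.support) (hvp : v ≠ m.degree p) (hdeg : aDegree A v = aDegree A (m.degree p))
    (i : β) : m.degree p i = 0 ∨ v i = 0 := by
  by_contra! hi
  set e : β →₀ ℕ := Finsupp.single i 1
  have hue : m.degree p - e + e = m.degree p :=
    tsub_add_cancel_of_le (Finsupp.single_le_iff.mpr (Nat.one_le_iff_ne_zero.mpr hi.1))
  have hve : v - e + e = v :=
    tsub_add_cancel_of_le (Finsupp.single_le_iff.mpr (Nat.one_le_iff_ne_zero.mpr hi.2))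
  have hne : m.degree p - e ≠ v - e := fun h => hvp (by rw [← hve, ← h, hue])
  have hdeg' : aDegree A (m.degree p - e) = aDegree A (v - e) := by
    apply add_right_cancel (b := aDegree A e)
    rw [← aDegree_add, ← aDegree_add, hue, hve, hdeg]
  have := hG.eq_degree_of_monomial_sub_monomial_mem hp hv hvp tsub_le_self tsub_le_self hne
    (monomial_sub_monomial_mem_toricIdeal A hdeg')
  rw [this, add_eq_left] at hue
  exact one_ne_zero (Finsupp.single_eq_zero.mp hue)

end IsReducedGroebnerBasis

section GraverVector

variable {ρ a b w : β → ℤ}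

lemma posPart_negPart_add_of_conformal (hρ : IsSignPattern ρ) (ha : ∀ i, 0 ≤ ρ i * a i)
    (hb : ∀ i, 0 ≤ ρ i * b i) :
    _root_.posPart a + _root_.posPart b = _root_.posPart (a + b) ∧
      _root_.negPart a + _root_.negPart b = _root_.negPart (a + b) := by
  constructor <;> ext i <;>
  · simp only [_root_.posPart, _root_.negPart, Finsupp.coe_add, Pi.add_apply,
      Finsupp.coe_equivFunOnFinite_symm]
    have hai := ha i
    have hbi := hb i
    rcases hρ i with h | h <;> rw [h] at hai hbi <;> omega

lemma posPart_ne_negPart (hw : w ≠ 0) : _root_.posPart w ≠ _root_.negPart w := by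
  intro h
  refine hw (funext fun i => ?_)
  have := DFunLike.congr_fun h i
  simp only [_root_.posPart, _root_.negPart, Finsupp.coe_equivFunOnFinite_symm] at this
  simp only [Pi.zero_apply]
  omega

/-- Two nonzero conformal summands of `w` would each have positive part `w⁺`. -/
lemma isGraverVector_of_forall_posPart_eq (A : Matrix α β ℤ) (hw : A.mulVec w = 0)
    (hw0 : _root_.posPart w ≠ 0)
    (h : ∀ a, A.mulVec a = 0 → a ≠ 0 → _root_.posPart a ≤ _root_.posPart w →
      _root_.negPart a ≤ _root_.negPart w → _root_.posPart a = _root_.posPart w) :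
    IsGraverVector A w := by
  set ρ : β → ℤ := fun i => if 0 ≤ w i then 1 else -1
  have hρ : IsSignPattern ρ := fun i => by by_cases h : 0 ≤ w i <;> simp [ρ, h]
  have hwρ : ∀ i, 0 ≤ ρ i * w i := fun i => by
    by_cases h : 0 ≤ w i <;> simp only [ρ, h, if_true, if_false] <;> omega
  refine ⟨ρ, hρ, ⟨hw, hwρ⟩, fun h0 => hw0 (by ext i; simp [h0, _root_.posPart]), ?_⟩
  rintro ⟨a, b, ⟨ha, haρ⟩, ⟨hb, hbρ⟩, ha0, hb0, rfl⟩
  obtain ⟨hpos, hneg⟩ := posPart_negPart_add_of_conformal hρ haρ hbρ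
  have hapos := h a ha ha0 (hpos ▸ le_self_add) (hneg ▸ le_self_add)
  have hbpos := h b hb hb0 (hpos ▸ le_add_self) (hneg ▸ le_add_self)
  rw [hapos, hbpos, add_eq_left] at hpos
  exact hw0 hpos

lemma posPart_negPart_natCast_sub {u v : β →₀ ℕ} (huv : ∀ i, u i = 0 ∨ v i = 0) :
    _root_.posPart (fun i => (u i : ℤ) - v i) = u ∧
      _root_.negPart (fun i => (u i : ℤ) - v i) = v := by
  constructor <;> ext i <;>
  · simp only [_root_.posPart, _root_.negPart, Finsupp.coe_equivFunOnFinite_symm]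
    rcases huv i with h | h <;> omega

end GraverVector

theorem graverBasis_contains_universalGroebnerBasis_general (d n : ℕ) (A : Matrix (Fin d) (Fin n) ℤ) :
    universalGroebnerBasis (toricIdeal A) ⊆ graverBasis A := by
  rintro p ⟨m, G, hG, hpG⟩
  obtain ⟨hpI, hp0⟩ := hG.1.2.1 p hpG
  obtain ⟨v, hv, hvp, hdeg⟩ :=
    exists_ne_aDegree_eq_of_mem_toricIdeal A hpI (m.degree_mem_support hp0)
  have hp := hG.eq_monomial_sub_monomial hpG hv hvp
    (monomial_sub_monomial_mem_toricIdeal A hdeg.symm)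
  obtain ⟨hpos, hneg⟩ := posPart_negPart_natCast_sub (hG.degree_apply_eq_zero_or_eq_zero hpG hv hvp hdeg)
  refine ⟨_, isGraverVector_of_forall_posPart_eq A ?_ ?_ ?_, by rw [binom, hpos, hneg, ← hp]⟩
  · exact mulVec_natCast_sub_eq_zero A hdeg.symm
  · rw [hpos]
    exact degree_ne_zero_of_mem_support m hv hvp
  · intro a ha ha0 hau hav
    rw [hpos] at hau ⊢
    rw [hneg] at hav
    exact hG.eq_degree_of_monomial_sub_monomial_mem hpG hv hvp hau hav (posPart_ne_negPart ha0)
      (binom_mem_toricIdeal A ha)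

/-- The Graver basis `Gr_A` contains the universal Gröbner basis `𝒰_A`: every
binomial appearing in some reduced Gröbner basis of `I_A` lies in `Gr_A`. -/
theorem graverBasis_contains_universalGroebnerBasis (d n : ℕ) (A : Matrix (Fin d) (Fin n) ℤ)
    (hrank : A.rank = d) (hpointed : PointedCone' A) (hrow : RowSpanOne A) :
    universalGroebnerBasis (toricIdeal A) ⊆ graverBasis A :=
  graverBasis_contains_universalGroebnerBasis_general d n A
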